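/- arXiv:2505.13821 — 3 statements merged into one kernel-verified Lean document; each statement's English description precedes it below -/
import Mathlib

section
/- If A, A' ∈ ℝ^{p×R} and B, B' ∈ ℝ^{d×R} satisfy B A ᵀ = B' A'ᵀ, B Bᵀ = B' B'ᵀ, and A Aᵀ = A' A'ᵀ, and additionally A has full column rank R, then there exists an orthogonal matrix G ∈ O(R) such that A' = A G and B' = B G. -/
open Matrix

/-- If `BAᵀ = B'A'ᵀ`, `BBᵀ = B'B'ᵀ`, `AAᵀ = A'A'ᵀ` and `A` has full column rank `R`,
then `A' = A G` and `B' = B G` for some orthogonal `G ∈ O(R)`. -/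
theorem factor_rotation_identifiability {p d R : ℕ}
    (A A' : Matrix (Fin p) (Fin R) ℝ) (B B' : Matrix (Fin d) (Fin R) ℝ)
    (hC : B * Aᵀ = B' * A'ᵀ)
    (hB : B * Bᵀ = B' * B'ᵀ)
    (hA : A * Aᵀ = A' * A'ᵀ)
    (hrank : A.rank = R) :
    ∃ G : Matrix (Fin R) (Fin R) ℝ,
      Gᵀ * G = 1 ∧ G * Gᵀ = 1 ∧ A' = A * G ∧ B' = B * G := by
  classical
  -- `N = AᵀA` is invertible
  have hNrank : (Aᵀ * A).rank = R := by
    rw [Matrix.rank_transpose_mul_self, hrank]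
  have hkerN : LinearMap.ker (Aᵀ * A).mulVecLin = ⊥ := by
    have hrn := LinearMap.finrank_range_add_finrank_ker (Aᵀ * A).mulVecLin
    have hdom : Module.finrank ℝ (Fin R → ℝ) = R := by simp
    have hr : Module.finrank ℝ (LinearMap.range (Aᵀ * A).mulVecLin) = R := hNrank
    have hk0 : Module.finrank ℝ (LinearMap.ker (Aᵀ * A).mulVecLin) = 0 := by omega
    exact Submodule.finrank_eq_zero.mp hk0
  have hdet : IsUnit (Aᵀ * A).det := by
    rw [isUnit_iff_ne_zero]
    intro h
    obtain ⟨v, hv, hv0⟩ := (Matrix.exists_mulVec_eq_zero_iff).mpr h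
    have : v ∈ LinearMap.ker (Aᵀ * A).mulVecLin := hv0
    rw [hkerN, Submodule.mem_bot] at this
    exact hv this
  have hNl : (Aᵀ * A)⁻¹ * (Aᵀ * A) = 1 := Matrix.nonsing_inv_mul _ hdet
  have hNl' : (Aᵀ * A)⁻¹ * Aᵀ * A = 1 := by rw [Matrix.mul_assoc]; exact hNl
  -- cancellation of `A` on the left and `Aᵀ` on the right
  have hcancelL : ∀ {m : ℕ} (X Y : Matrix (Fin R) (Fin m) ℝ),
      A * X = A * Y → X = Y := by
    intro m X Y h
    have h2 := congrArg (fun Z => (Aᵀ * A)⁻¹ * Aᵀ * Z) h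
    simpa only [← Matrix.mul_assoc, hNl', Matrix.one_mul] using h2
  have hcancelR : ∀ {m : ℕ} (X Y : Matrix (Fin m) (Fin R) ℝ),
      X * Aᵀ = Y * Aᵀ → X = Y := by
    intro m X Y h
    have h2 := congrArg (fun Z => Z * (A * ((Aᵀ * A)⁻¹))) h
    simp only [← Matrix.mul_assoc] at h2
    rw [Matrix.mul_assoc X Aᵀ A, Matrix.mul_assoc X _ _,
      Matrix.mul_assoc Y Aᵀ A, Matrix.mul_assoc Y _ _] at h2
    simpa only [Matrix.mul_nonsing_inv _ hdet, Matrix.mul_one] using h2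
  set G : Matrix (Fin R) (Fin R) ℝ := (Aᵀ * A)⁻¹ * Aᵀ * A' with hGdef
  -- key algebraic identities
  have e1 : (A * G) * A'ᵀ = A * Aᵀ := by
    rw [hGdef]
    simp only [Matrix.mul_assoc]
    rw [← hA, ← Matrix.mul_assoc Aᵀ A Aᵀ, ← Matrix.mul_assoc _ (Aᵀ * A) Aᵀ,
      hNl, Matrix.one_mul]
  have e2 : A' * (Gᵀ * Aᵀ) = A * Aᵀ := by
    have h2 := congrArg Matrix.transpose e1
    simpa only [Matrix.transpose_mul, Matrix.transpose_transpose, Matrix.mul_assoc] using h2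
  have e3 : (A * G) * (Gᵀ * Aᵀ) = A * Aᵀ := by
    calc A * G * (Gᵀ * Aᵀ)
        = A * ((Aᵀ * A)⁻¹ * (Aᵀ * (A' * (Gᵀ * Aᵀ)))) := by
          rw [hGdef]
          simp only [Matrix.mul_assoc]
      _ = A * ((Aᵀ * A)⁻¹ * (Aᵀ * (A * Aᵀ))) := by rw [e2]
      _ = A * Aᵀ := by
          rw [← Matrix.mul_assoc Aᵀ A Aᵀ, ← Matrix.mul_assoc _ (Aᵀ * A) Aᵀ,
            hNl, Matrix.one_mul]
  -- `A' = A * G`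
  have hM : (A' - A * G) * (A' - A * G)ᵀ = 0 := by
    rw [Matrix.transpose_sub, Matrix.transpose_mul, Matrix.sub_mul, Matrix.mul_sub,
      Matrix.mul_sub, e2, e3, e1, ← hA]
    abel
  have hA'G : A' = A * G := by
    have h0 : A' - A * G = 0 := by
      apply Matrix.self_mul_conjTranspose_eq_zero.mp
      rwa [Matrix.conjTranspose_eq_transpose_of_trivial]
    exact sub_eq_zero.mp h0
  -- `G` is orthogonal
  have hGGT : G * Gᵀ = 1 := by
    apply hcancelR
    apply hcancelL
    rw [← Matrix.mul_assoc, ← Matrix.mul_assoc, Matrix.mul_assoc (A * G) Gᵀ Aᵀ, e3,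
      Matrix.one_mul]
  have hGTG : Gᵀ * G = 1 := mul_eq_one_comm.mp hGGT
  -- `B' = B * G`
  have hBB' : B = B' * Gᵀ := by
    apply hcancelR
    rw [hC, hA'G, Matrix.transpose_mul, ← Matrix.mul_assoc]
  refine ⟨G, hGTG, hGGT, hA'G, ?_⟩
  rw [hBB', Matrix.mul_assoc, hGTG, Matrix.mul_one]
end

section
/- For any θ ∈ ℝ and f₁ ∈ ℝ, f₂ > 0, Polson's integral identity holds: e^{f₁θ} / (1 + e^{θ})^{f₂} = 2^{-f₂} e^{κθ} ∫₀^∞ e^{-ω θ²/2} p_{PG(f₂,0)}(ω) dω, where κ = f₁ − f₂/2 and p_{PG(f₂,0)} is the density of the Pólya–Gamma distribution PG(f₂,0); equivalently, cosh^{-f₂}(θ/2) = 𝔼_{ω∼PG(f₂,0)}[e^{-ωθ²/2}]. -/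
/-!
Each term `g ℓ / (ℓ + 1/2)²` is a rescaled Gamma variable, so by the Gamma m.g.f. its Laplace
transform at `(x/π)²` is `(1 + (x/π)² / (ℓ + 1/2)²)^(-a)`. By independence the Laplace transform of
a partial sum is the product of these factors, and since the integrands take values in `[0, 1]`,
dominated convergence lets the partial sums pass to the series. The products converge to
`cosh x ^ (-a)` by the cosine product `cosh x = ∏ (1 + (x/π)² / (ℓ + 1/2)²)`, which is the quotient
of Euler's sine products for `sin (2πz)` and `2 sin (πz)`. The second identity is the algebra
`1 + e^θ = 2 e^{θ/2} cosh (θ/2)`.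
-/

open MeasureTheory ProbabilityTheory Real Filter Set Topology
open scoped ENNReal

theorem Finset.prod_range_two_mul {M : Type*} [CommMonoid M] (f : ℕ → M) (n : ℕ) :
    ∏ j ∈ Finset.range (2 * n), f j = ∏ j ∈ Finset.range n, (f (2 * j) * f (2 * j + 1)) := by
  induction n with
  | zero => simp
  | succ n ih => rw [Nat.mul_succ, prod_range_succ, prod_range_succ, prod_range_succ, ih, mul_assoc]

theorem Complex.tendsto_euler_cos_prod {z : ℂ} (hz : Complex.sin (π * z) ≠ 0) :
    Tendsto (fun n : ℕ ↦ ∏ j ∈ Finset.range n, (1 - z ^ 2 / ((j : ℂ) + 1 / 2) ^ 2)) atTop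
      (𝓝 (Complex.cos (π * z))) := by
  set P : ℕ → ℂ := fun n ↦ ∏ j ∈ Finset.range n, (1 - z ^ 2 / ((j : ℂ) + 1) ^ 2)
  set C : ℕ → ℂ := fun n ↦ ∏ j ∈ Finset.range n, (1 - z ^ 2 / ((j : ℂ) + 1 / 2) ^ 2)
  have hsin : Tendsto (fun n ↦ π * z * P n) atTop (𝓝 (Complex.sin (π * z))) :=
    Complex.tendsto_euler_sin_prod z
  -- The odd-indexed factors of Euler's product for `sin (2πz)` form that for `sin (πz)`.
  have hsin_two : Tendsto (fun n ↦ π * z * P n * (2 * C n)) atTop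
      (𝓝 (Complex.sin (π * (2 * z)))) := by
    refine ((Complex.tendsto_euler_sin_prod (2 * z)).comp
      (tendsto_atTop_mono (fun n ↦ by dsimp; omega) tendsto_id : Tendsto (2 * ·) atTop atTop)).congr
      fun n ↦ ?_
    have h4 : ∀ w : ℂ, (2 * z) ^ 2 / (2 * w) ^ 2 = z ^ 2 / w ^ 2 := fun w ↦ by
      rw [mul_pow, mul_pow, mul_div_mul_left _ _ (by norm_num)]
    simp only [Function.comp_apply, Finset.prod_range_two_mul, Finset.prod_mul_distrib, P, C]
    push_cast
    simp_rw [show ∀ j : ℂ, 2 * j + 1 + 1 = 2 * (j + 1) from fun j ↦ by ring,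
      show ∀ j : ℂ, 2 * j + 1 = 2 * (j + 1 / 2) from fun j ↦ by ring]
    simp only [h4]
    ring
  have hcos : Complex.sin (π * (2 * z)) / (2 * Complex.sin (π * z)) = Complex.cos (π * z) := by
    rw [← mul_assoc, mul_comm _ (2 : ℂ), mul_assoc, Complex.sin_two_mul]
    field_simp
  rw [← hcos]
  refine (hsin_two.div (hsin.const_mul 2) (mul_ne_zero two_ne_zero hz)).congr' ?_
  filter_upwards [hsin.eventually_ne hz] with n hn
  simp only [Pi.div_apply]
  rw [mul_left_comm, mul_div_mul_left _ _ two_ne_zero, mul_div_cancel_left₀ _ hn]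

theorem Real.tendsto_euler_cosh_prod (x : ℝ) :
    Tendsto (fun n : ℕ ↦ ∏ j ∈ Finset.range n, (1 + (x / π) ^ 2 / ((j : ℝ) + 1 / 2) ^ 2)) atTop
      (𝓝 (cosh x)) := by
  rcases eq_or_ne x 0 with rfl | hx
  · simp
  have hπz : (π : ℂ) * ((x / π : ℝ) * Complex.I) = x * Complex.I := by
    push_cast; field_simp
  have hsin : Complex.sin (π * ((x / π : ℝ) * Complex.I)) ≠ 0 := by
    rw [hπz, Complex.sin_mul_I, ← Complex.ofReal_sinh]
    exact mul_ne_zero (Complex.ofReal_ne_zero.mpr (sinh_ne_zero.mpr hx)) Complex.I_ne_zero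
  have h := Complex.tendsto_euler_cos_prod hsin
  rw [hπz, Complex.cos_mul_I, ← Complex.ofReal_cosh] at h
  refine tendsto_ofReal_iff.mp (h.congr fun n ↦ ?_)
  push_cast
  refine Finset.prod_congr rfl fun j _ ↦ ?_
  rw [mul_pow, Complex.I_sq]
  ring

namespace ProbabilityTheory

variable {Ω : Type*} [MeasurableSpace Ω] {μ : Measure Ω}

lemma measurable_gammaPDF (a r : ℝ) : Measurable (gammaPDF a r) :=
  (measurable_gammaPDFReal a r).ennreal_ofReal

lemma ae_nonneg_gammaMeasure (a r : ℝ) : ∀ᵐ y ∂gammaMeasure a r, 0 ≤ y := by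
  rw [gammaMeasure, ae_withDensity_iff (measurable_gammaPDF a r)]
  exact ae_of_all _ fun y hy ↦ not_lt.mp fun hneg ↦ hy (gammaPDF_of_neg hneg)

lemma mgf_id_gammaMeasure {a r s : ℝ} (ha : 0 < a) (hr : 0 < r) (hs : s < r) :
    mgf id (gammaMeasure a r) s = (1 - s / r) ^ (-a) := by
  have hrs : 0 < r - s := sub_pos.mpr hs
  have hq : 0 ≤ 1 / (r - s) * r := (mul_pos (one_div_pos.mpr hrs) hr).le
  have hdens : ∀ y, (gammaPDF a r y).toReal • exp (s * id y) =
      (Ici 0).indicator (fun y ↦ r ^ a / Gamma a * (y ^ (a - 1) * exp (-((r - s) * y)))) y := by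
    intro y
    rw [gammaPDF, ENNReal.toReal_ofReal (gammaPDFReal_nonneg ha hr y), smul_eq_mul, gammaPDFReal]
    split_ifs with hy
    · rw [indicator_of_mem (mem_Ici.mpr hy), mul_assoc, mul_assoc, ← exp_add, id]
      ring_nf
    · rw [indicator_of_notMem (by simpa using hy), zero_mul]
  rw [mgf, gammaMeasure, integral_withDensity_eq_integral_toReal_smul (measurable_gammaPDF a r)
    (ae_of_all _ fun _ ↦ ENNReal.ofReal_lt_top)]
  simp_rw [hdens]
  rw [integral_indicator measurableSet_Ici, integral_Ici_eq_integral_Ioi, integral_const_mul,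
    integral_rpow_mul_exp_neg_mul_Ioi ha hrs, mul_left_comm, div_mul_cancel₀ _
    (Gamma_pos_of_pos ha).ne', ← mul_rpow (one_div_pos.mpr hrs).le hr.le,
    show 1 - s / r = (1 / (r - s) * r)⁻¹ by field_simp, rpow_neg (inv_nonneg.mpr hq),
    inv_rpow hq, inv_inv]

lemma mgf_eq_of_map_eq_gammaMeasure {X : Ω → ℝ} (hX : AEMeasurable X μ) {a r s : ℝ}
    (h : μ.map X = gammaMeasure a r) (ha : 0 < a) (hr : 0 < r) (hs : s < r) :
    mgf X μ s = (1 - s / r) ^ (-a) := by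
  rw [← mgf_id_map hX, h, mgf_id_gammaMeasure ha hr hs]

lemma ae_nonneg_of_map_eq_gammaMeasure {X : Ω → ℝ} (hX : AEMeasurable X μ) {a r : ℝ}
    (h : μ.map X = gammaMeasure a r) :
    ∀ᵐ y ∂μ, 0 ≤ X y :=
  ae_of_ae_map hX (h ▸ ae_nonneg_gammaMeasure a r)

lemma integrable_id_gammaMeasure {a r : ℝ} (ha : 0 < a) (hr : 0 < r) :
    Integrable id (gammaMeasure a r) := by
  have := isProbabilityMeasure_gammaMeasure ha hr
  refine integrable_of_mem_interior_integrableExpSet (mem_interior_iff_mem_nhds.mpr ?_)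
  refine mem_of_superset (Iio_mem_nhds hr) fun s hs ↦ ?_
  rw [integrableExpSet, mem_ofPred_eq, ← mgf_pos_iff, mgf_id_gammaMeasure ha hr hs]
  exact rpow_pos_of_pos (by rw [sub_pos, div_lt_one hr]; exact hs) _

theorem ae_summable_mul_of_eLpNorm_le {c : ℕ → ℝ} (hc : Summable c) {Y : ℕ → Ω → ℝ}
    (hY : ∀ ℓ, AEStronglyMeasurable (Y ℓ) μ) {C : ℝ≥0∞} (hC : C ≠ ∞)
    (hYC : ∀ ℓ, eLpNorm (Y ℓ) 1 μ ≤ C) :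
    ∀ᵐ x ∂μ, Summable fun ℓ ↦ c ℓ * Y ℓ x := by
  have hc_enorm : ∑' ℓ, ‖c ℓ‖ₑ ≠ ∞ :=
    tsum_enorm_ne_top_iff_summable_norm.mpr (summable_abs_iff.mpr hc)
  have hsum : ∑' ℓ, eLpNorm (c ℓ • Y ℓ) 1 μ ≠ ∞ := by
    refine ne_top_of_le_ne_top (ENNReal.mul_ne_top hc_enorm hC) ?_
    rw [← ENNReal.tsum_mul_right]
    exact ENNReal.tsum_le_tsum fun ℓ ↦ (eLpNorm_const_smul _ _ _ _).trans_le
      (by gcongr; exact hYC ℓ)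
  filter_upwards [summable_norm_of_tsum_eLpNorm_ne_top le_rfl
    (fun ℓ ↦ (hY ℓ).const_smul (c ℓ)) hsum] with x hx
  exact hx.of_norm

theorem iIndepFun.tendsto_prod_mgf_of_nonneg {X : ℕ → Ω → ℝ} (hindep : iIndepFun X μ)
    (hmeas : ∀ ℓ, Measurable (X ℓ)) (hnonneg : ∀ᵐ x ∂μ, ∀ ℓ, 0 ≤ X ℓ x)
    (hsum : ∀ᵐ x ∂μ, Summable fun ℓ ↦ X ℓ x) {t : ℝ} (ht : t ≤ 0) :
    Tendsto (fun n ↦ ∏ ℓ ∈ Finset.range n, mgf (X ℓ) μ t) atTop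
      (𝓝 (mgf (fun x ↦ ∑' ℓ, X ℓ x) μ t)) := by
  have := hindep.isProbabilityMeasure
  simp_rw [← hindep.mgf_sum hmeas, mgf, Finset.sum_apply]
  refine tendsto_integral_of_dominated_convergence (fun _ ↦ 1)
    (fun n ↦ ((Finset.measurable_sum _ fun ℓ _ ↦ hmeas ℓ).const_mul t).exp.aestronglyMeasurable)
    (integrable_const 1) (fun n ↦ ?_) ?_
  · filter_upwards [hnonneg] with x hx
    rw [norm_eq_abs, abs_exp, exp_le_one_iff]
    exact mul_nonpos_of_nonpos_of_nonneg ht (Finset.sum_nonneg fun ℓ _ ↦ hx ℓ)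
  · filter_upwards [hsum] with x hx
    exact (continuous_exp.tendsto _).comp (hx.hasSum.tendsto_sum_nat.const_mul t)

theorem integral_exp_neg_mul_tsum_gamma_div_sq {a : ℝ} (ha : 0 < a) {g : ℕ → Ω → ℝ}
    (hindep : iIndepFun g μ) (hmeas : ∀ ℓ, Measurable (g ℓ))
    (hlaw : ∀ ℓ, μ.map (g ℓ) = gammaMeasure a 1) (x : ℝ) :
    ∫ y, exp (-(x / π) ^ 2 * ∑' ℓ, g ℓ y / ((ℓ : ℝ) + 1 / 2) ^ 2) ∂μ = cosh x ^ (-a) := by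
  set c : ℕ → ℝ := fun ℓ ↦ (((ℓ : ℝ) + 1 / 2) ^ 2)⁻¹
  have ht : -(x / π) ^ 2 ≤ 0 := neg_nonpos.mpr (sq_nonneg _)
  have hc : Summable c := ((summable_one_div_nat_add_rpow (1 / 2) 2).mpr one_lt_two).congr
    fun ℓ ↦ by rw [rpow_two, sq_abs, one_div]
  have hmgf : ∀ ℓ, mgf (fun y ↦ c ℓ * g ℓ y) μ (-(x / π) ^ 2) =
      (1 + (x / π) ^ 2 / ((ℓ : ℝ) + 1 / 2) ^ 2) ^ (-a) := by
    intro ℓ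
    rw [mgf_const_mul, mgf_eq_of_map_eq_gammaMeasure (hmeas ℓ).aemeasurable (hlaw ℓ) ha one_pos
      ((mul_nonpos_of_nonneg_of_nonpos (by positivity) ht).trans_lt one_pos)]
    congr 1
    simp only [c]
    ring
  have hnonneg : ∀ᵐ y ∂μ, ∀ ℓ, 0 ≤ c ℓ * g ℓ y := ae_all_iff.mpr fun ℓ ↦
    (ae_nonneg_of_map_eq_gammaMeasure (hmeas ℓ).aemeasurable (hlaw ℓ)).mono
      fun y hy ↦ mul_nonneg (by positivity) hy
  have hsum : ∀ᵐ y ∂μ, Summable fun ℓ ↦ c ℓ * g ℓ y :=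
    ae_summable_mul_of_eLpNorm_le hc (fun ℓ ↦ (hmeas ℓ).aestronglyMeasurable)
      (memLp_one_iff_integrable.mpr (integrable_id_gammaMeasure ha one_pos)).eLpNorm_lt_top.ne
      fun ℓ ↦ le_of_eq <| by
        rw [← hlaw ℓ, eLpNorm_map_measure aestronglyMeasurable_id (hmeas ℓ).aemeasurable]; rfl
  have hindep' : iIndepFun (fun ℓ y ↦ c ℓ * g ℓ y) μ :=
    hindep.comp (fun ℓ y ↦ c ℓ * y) fun ℓ ↦ measurable_const.mul measurable_id
  have hlim := hindep'.tendsto_prod_mgf_of_nonneg (fun ℓ ↦ measurable_const.mul (hmeas ℓ))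
    hnonneg hsum ht
  simp_rw [hmgf] at hlim
  have hdiv : ∀ y, ∑' ℓ, g ℓ y / ((ℓ : ℝ) + 1 / 2) ^ 2 = ∑' ℓ, c ℓ * g ℓ y :=
    fun y ↦ tsum_congr fun ℓ ↦ div_eq_inv_mul _ _
  simp_rw [hdiv]
  refine tendsto_nhds_unique hlim
    (((tendsto_euler_cosh_prod x).rpow_const (Or.inl (cosh_pos x).ne')).congr fun n ↦ ?_)
  exact (Real.finsetProd_rpow _ _ (fun ℓ _ ↦ by positivity) _).symm

end ProbabilityTheory

theorem Real.exp_mul_div_one_add_exp_rpow (f₁ f₂ θ : ℝ) :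
    exp (f₁ * θ) / (1 + exp θ) ^ f₂ =
      2 ^ (-f₂) * exp ((f₁ - f₂ / 2) * θ) * cosh (θ / 2) ^ (-f₂) := by
  have hcosh := cosh_pos (θ / 2)
  have h1e : 1 + exp θ = 2 * exp (θ / 2) * cosh (θ / 2) := by
    rw [cosh_eq, mul_assoc, mul_left_comm, mul_div_cancel₀ _ two_ne_zero, mul_add, ← exp_add,
      ← exp_add]
    norm_num [add_comm]
  rw [h1e, mul_rpow (by positivity) hcosh.le, mul_rpow zero_le_two (exp_pos _).le, ← exp_mul,
    rpow_neg zero_le_two, rpow_neg hcosh.le, sub_mul, exp_sub, mul_comm (θ / 2)]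
  field_simp

theorem polson_polya_gamma_identity_general
    {Ω : Type*} [MeasurableSpace Ω] (μ : Measure Ω)
    (f₁ f₂ θ : ℝ) (hf₂ : 0 < f₂)
    (g : ℕ → Ω → ℝ)
    (hindep : iIndepFun g μ)
    (hmeas : ∀ ℓ, Measurable (g ℓ))
    (hlaw : ∀ ℓ, μ.map (g ℓ) = gammaMeasure f₂ 1)
    (ω : Ω → ℝ)
    (hω : ∀ x, ω x = (1 / (2 * π ^ 2)) *
      ∑' ℓ : ℕ, g ℓ x / ((ℓ : ℝ) + 1 / 2) ^ 2) :
    (∫ x, Real.exp (-(ω x) * θ ^ 2 / 2) ∂μ) = Real.cosh (θ / 2) ^ (-f₂) ∧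
    Real.exp (f₁ * θ) / (1 + Real.exp θ) ^ f₂ =
      (2 : ℝ) ^ (-f₂) * Real.exp ((f₁ - f₂ / 2) * θ) *
        ∫ x, Real.exp (-(ω x) * θ ^ 2 / 2) ∂μ := by
  have hint : ∫ x, exp (-(ω x) * θ ^ 2 / 2) ∂μ = cosh (θ / 2) ^ (-f₂) := by
    rw [← integral_exp_neg_mul_tsum_gamma_div_sq hf₂ hindep hmeas hlaw (θ / 2)]
    congr with x
    rw [hω x]
    field_simp
  exact ⟨hint, hint ▸ exp_mul_div_one_add_exp_rpow f₁ f₂ θ⟩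

/-- Polson's Pólya–Gamma integral identity: if `ω = (1/(2π²)) Σ_ℓ g_ℓ/(ℓ-1/2)²`
with `g_ℓ` i.i.d. `Gamma(f₂,1)`, then
`e^{f₁θ}/(1+e^θ)^{f₂} = 2^{-f₂} e^{κθ} 𝔼[e^{-ωθ²/2}]` with `κ = f₁ - f₂/2`;
equivalently `𝔼[e^{-ωθ²/2}] = cosh(θ/2)^{-f₂}`. -/
theorem polson_polya_gamma_identity
    {Ω : Type*} [MeasurableSpace Ω] (μ : Measure Ω) [IsProbabilityMeasure μ]
    (f₁ f₂ θ : ℝ) (hf₂ : 0 < f₂)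
    (g : ℕ → Ω → ℝ)
    (hindep : iIndepFun g μ)
    (hmeas : ∀ ℓ, Measurable (g ℓ))
    (hlaw : ∀ ℓ, μ.map (g ℓ) = gammaMeasure f₂ 1)
    (ω : Ω → ℝ)
    (hω : ∀ x, ω x = (1 / (2 * π ^ 2)) *
      ∑' ℓ : ℕ, g ℓ x / ((ℓ : ℝ) + 1 / 2) ^ 2) :
    (∫ x, Real.exp (-(ω x) * θ ^ 2 / 2) ∂μ) = Real.cosh (θ / 2) ^ (-f₂) ∧
    Real.exp (f₁ * θ) / (1 + Real.exp θ) ^ f₂ =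
      (2 : ℝ) ^ (-f₂) * Real.exp ((f₁ - f₂ / 2) * θ) *
        ∫ x, Real.exp (-(ω x) * θ ^ 2 / 2) ∂μ :=
  polson_polya_gamma_identity_general μ f₁ f₂ θ hf₂ g hindep hmeas hlaw ω hω
end

section
/- Under the Three-Parameter Beta–Normal hierarchy β | ζ ∼ N(0, ζ), ζ | ξ ∼ Gamma(u, ξ), ξ ∼ Gamma(a, τ), with 0 < a, u and τ > 0, the marginal prior of β places unbounded density at zero when u ≤ 1/2: the marginal density p(β) = ∫₀^∞ N(β; 0, ζ) p(ζ) dζ satisfies p(β) → ∞ as β → 0 whenever u ≤ 1/2, where p(ζ) ∝ ζ^{u−1}(ζ+τ)^{−(a+u)}. -/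
/-!
Near `ζ = 0` the beta-prime density is of order `ζ^(u-1)`, and on `ζ ≥ β²` the exponential factor
of the normal density is at least `1/2`, so the normal density is of order `ζ^(-1/2)` there. Hence
for `u ≤ 1/2`, `p β ≥ c ∫_{β²}^1 ζ^(u-3/2) dζ ≥ c ∫_{β²}^1 ζ⁻¹ dζ = -c log β²`, which tends to `∞`.
For `β ≠ 0` the bound `exp (-β²/(2ζ)) ≤ 2ζ/β²` makes the mixture integrable, so the Bochner integral
defining `p β` is the genuine one and not the junk value `0`.
-/

open Real MeasureTheory Filter Set Topology

noncomputable section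

def normalDensity (β ζ : ℝ) : ℝ := (2 * π * ζ) ^ (-(1 : ℝ) / 2) * Real.exp (-β ^ 2 / (2 * ζ))

def betaPrimeNormalizer (a u τ : ℝ) : ℝ := Real.Gamma (a + u) / (Real.Gamma a * Real.Gamma u) * τ ^ a

def betaPrimeDensity (a u τ ζ : ℝ) : ℝ :=
  betaPrimeNormalizer a u τ * ζ ^ (u - 1) * (ζ + τ) ^ (-(a + u))

def marginalDensity (a u τ β : ℝ) : ℝ :=
  ∫ ζ in Ioi 0, normalDensity β ζ * betaPrimeDensity a u τ ζ

lemma Real.exp_neg_le_inv {x : ℝ} (hx : 0 < x) : Real.exp (-x) ≤ x⁻¹ := by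
  rw [Real.exp_neg]
  exact inv_anti₀ hx (by linarith [add_one_le_exp x])

lemma integrableOn_Ioi_zero_of_le_rpow {f : ℝ → ℝ} {s t K L : ℝ}
    (hf : AEStronglyMeasurable f (volume.restrict (Ioi 0))) (hs : -1 < s) (ht : t < -1)
    (h₀ : ∀ x ∈ Ioc 0 1, ‖f x‖ ≤ K * x ^ s) (h₁ : ∀ x ∈ Ioi 1, ‖f x‖ ≤ L * x ^ t) :
    IntegrableOn f (Ioi 0) := by
  rw [← Ioc_union_Ioi_eq_Ioi zero_le_one]
  refine IntegrableOn.union ?_ ?_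
  · have hrpow : IntegrableOn (fun x : ℝ => x ^ s) (Ioc 0 1) :=
      (intervalIntegrable_iff_integrableOn_Ioc_of_le zero_le_one).1
        (intervalIntegral.intervalIntegrable_rpow' hs)
    exact (hrpow.const_mul K).mono' (hf.mono_set Ioc_subset_Ioi_self)
      ((ae_restrict_mem measurableSet_Ioc).mono h₀)
  · exact ((integrableOn_Ioi_rpow_of_lt ht one_pos).const_mul L).mono'
      (hf.mono_set (Ioi_subset_Ioi zero_le_one)) ((ae_restrict_mem measurableSet_Ioi).mono h₁)

section NormalDensity

variable {β ζ : ℝ}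

lemma normalDensity_nonneg (β : ℝ) (hζ : 0 ≤ ζ) : 0 ≤ normalDensity β ζ := by
  unfold normalDensity
  positivity

lemma normalDensity_eq (β : ℝ) (hζ : 0 ≤ ζ) :
    normalDensity β ζ = (2 * π) ^ (-(1 : ℝ) / 2) * ζ ^ (-(1 : ℝ) / 2) * Real.exp (-β ^ 2 / (2 * ζ)) := by
  rw [normalDensity, mul_rpow (by positivity) hζ]

lemma normalDensity_le (β : ℝ) (hζ : 0 ≤ ζ) :
    normalDensity β ζ ≤ (2 * π) ^ (-(1 : ℝ) / 2) * ζ ^ (-(1 : ℝ) / 2) := by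
  rw [normalDensity_eq β hζ]
  refine mul_le_of_le_one_right (by positivity) (Real.exp_le_one_iff.2 ?_)
  rw [neg_div, neg_nonpos]
  positivity

lemma normalDensity_le_of_ne_zero (hβ : β ≠ 0) (hζ : 0 < ζ) :
    normalDensity β ζ ≤ (2 * π) ^ (-(1 : ℝ) / 2) * (2 / β ^ 2) * ζ ^ ((1 : ℝ) / 2) := by
  have hβ₀ : 0 < β ^ 2 := sq_pos_iff.2 hβ
  have hexp : Real.exp (-β ^ 2 / (2 * ζ)) ≤ (β ^ 2 / (2 * ζ))⁻¹ := by
    rw [neg_div]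
    exact Real.exp_neg_le_inv (by positivity)
  calc normalDensity β ζ
      ≤ (2 * π) ^ (-(1 : ℝ) / 2) * ζ ^ (-(1 : ℝ) / 2) * (β ^ 2 / (2 * ζ))⁻¹ := by
        rw [normalDensity_eq β hζ.le]
        exact mul_le_mul_of_nonneg_left hexp (by positivity)
    _ = (2 * π) ^ (-(1 : ℝ) / 2) * (2 / β ^ 2) * (ζ ^ (-(1 : ℝ) / 2) * ζ ^ (1 : ℝ)) := by
        rw [rpow_one]
        field_simp
    _ = _ := by
        rw [← rpow_add hζ]
        norm_num

lemma half_mul_rpow_le_normalDensity (hζ : 0 < ζ) (hβζ : β ^ 2 ≤ ζ) :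
    (2 * π) ^ (-(1 : ℝ) / 2) / 2 * ζ ^ (-(1 : ℝ) / 2) ≤ normalDensity β ζ := by
  rw [normalDensity_eq β hζ.le]
  have hratio : β ^ 2 / (2 * ζ) ≤ 1 / 2 := by
    rw [div_le_div_iff₀ (by positivity) two_pos]
    linarith
  have hexp : 1 / 2 ≤ Real.exp (-β ^ 2 / (2 * ζ)) := by
    have := add_one_le_exp (-β ^ 2 / (2 * ζ))
    rw [neg_div] at this ⊢
    linarith
  calc _ = (2 * π) ^ (-(1 : ℝ) / 2) * ζ ^ (-(1 : ℝ) / 2) * (1 / 2) := by ring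
    _ ≤ _ := by gcongr

end NormalDensity

section BetaPrimeDensity

variable {a u τ ζ : ℝ}

lemma betaPrimeNormalizer_pos (ha : 0 < a) (hu : 0 < u) (hτ : 0 < τ) :
    0 < betaPrimeNormalizer a u τ := by
  have := Real.Gamma_pos_of_pos ha
  have := Real.Gamma_pos_of_pos hu
  have := Real.Gamma_pos_of_pos (add_pos ha hu)
  unfold betaPrimeNormalizer
  positivity

lemma betaPrimeDensity_nonneg (ha : 0 < a) (hu : 0 < u) (hτ : 0 < τ) (hζ : 0 ≤ ζ) :
    0 ≤ betaPrimeDensity a u τ ζ := by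
  have := betaPrimeNormalizer_pos ha hu hτ
  unfold betaPrimeDensity
  positivity

lemma betaPrimeDensity_le_mul_rpow_sub_one (ha : 0 < a) (hu : 0 < u) (hτ : 0 < τ) (hζ : 0 < ζ) :
    betaPrimeDensity a u τ ζ ≤ betaPrimeNormalizer a u τ * τ ^ (-(a + u)) * ζ ^ (u - 1) := by
  have := betaPrimeNormalizer_pos ha hu hτ
  have hτζ : (ζ + τ) ^ (-(a + u)) ≤ τ ^ (-(a + u)) :=
    rpow_le_rpow_of_nonpos hτ (by linarith) (by linarith)
  calc betaPrimeDensity a u τ ζ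
      ≤ betaPrimeNormalizer a u τ * ζ ^ (u - 1) * τ ^ (-(a + u)) := by
        unfold betaPrimeDensity
        gcongr
    _ = _ := by ring

lemma betaPrimeDensity_le_mul_rpow_neg (ha : 0 < a) (hu : 0 < u) (hτ : 0 < τ) (hζ : 0 < ζ) :
    betaPrimeDensity a u τ ζ ≤ betaPrimeNormalizer a u τ * ζ ^ (-(a + 1)) := by
  have := betaPrimeNormalizer_pos ha hu hτ
  have hτζ : (ζ + τ) ^ (-(a + u)) ≤ ζ ^ (-(a + u)) :=
    rpow_le_rpow_of_nonpos hζ (by linarith) (by linarith)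
  calc betaPrimeDensity a u τ ζ
      ≤ betaPrimeNormalizer a u τ * (ζ ^ (u - 1) * ζ ^ (-(a + u))) := by
        rw [← mul_assoc]
        unfold betaPrimeDensity
        gcongr
    _ = _ := by
        rw [← rpow_add hζ]
        ring_nf

lemma mul_rpow_sub_one_le_betaPrimeDensity (ha : 0 < a) (hu : 0 < u) (hτ : 0 < τ) (hζ : 0 < ζ)
    (hζ₁ : ζ ≤ 1) :
    betaPrimeNormalizer a u τ * (1 + τ) ^ (-(a + u)) * ζ ^ (u - 1) ≤ betaPrimeDensity a u τ ζ := by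
  have := betaPrimeNormalizer_pos ha hu hτ
  have hτζ : (1 + τ) ^ (-(a + u)) ≤ (ζ + τ) ^ (-(a + u)) :=
    rpow_le_rpow_of_nonpos (by linarith) (by linarith) (by linarith)
  calc _ = betaPrimeNormalizer a u τ * ζ ^ (u - 1) * (1 + τ) ^ (-(a + u)) := by ring
    _ ≤ betaPrimeDensity a u τ ζ := by
        unfold betaPrimeDensity
        gcongr

end BetaPrimeDensity

section MarginalDensity

variable {a u τ : ℝ}

lemma integrableOn_normalDensity_mul_betaPrimeDensity (ha : 0 < a) (hu : 0 < u) (hτ : 0 < τ)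
    {β : ℝ} (hβ : β ≠ 0) :
    IntegrableOn (fun ζ => normalDensity β ζ * betaPrimeDensity a u τ ζ) (Ioi 0) := by
  have hmeas : Measurable (fun ζ => normalDensity β ζ * betaPrimeDensity a u τ ζ) := by
    unfold normalDensity betaPrimeDensity
    fun_prop
  refine integrableOn_Ioi_zero_of_le_rpow hmeas.aestronglyMeasurable
    (s := u - 1 / 2) (t := -(a + 3 / 2))
    (K := (2 * π) ^ (-(1 : ℝ) / 2) * (2 / β ^ 2) * (betaPrimeNormalizer a u τ * τ ^ (-(a + u))))
    (L := (2 * π) ^ (-(1 : ℝ) / 2) * betaPrimeNormalizer a u τ) (by linarith) (by linarith) ?_ ?_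
  · intro ζ ⟨hζ, _⟩
    rw [norm_of_nonneg (mul_nonneg (normalDensity_nonneg β hζ.le)
      (betaPrimeDensity_nonneg ha hu hτ hζ.le))]
    calc _ ≤ (2 * π) ^ (-(1 : ℝ) / 2) * (2 / β ^ 2) * ζ ^ ((1 : ℝ) / 2) *
          (betaPrimeNormalizer a u τ * τ ^ (-(a + u)) * ζ ^ (u - 1)) :=
          mul_le_mul (normalDensity_le_of_ne_zero hβ hζ)
            (betaPrimeDensity_le_mul_rpow_sub_one ha hu hτ hζ)
            (betaPrimeDensity_nonneg ha hu hτ hζ.le) (by positivity)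
      _ = (2 * π) ^ (-(1 : ℝ) / 2) * (2 / β ^ 2) * (betaPrimeNormalizer a u τ * τ ^ (-(a + u))) *
          ζ ^ ((1 : ℝ) / 2 + (u - 1)) := by
          rw [rpow_add hζ]
          ring
      _ = _ := by ring_nf
  · intro ζ hζ
    have hζ₀ : 0 < ζ := one_pos.trans hζ
    rw [norm_of_nonneg (mul_nonneg (normalDensity_nonneg β hζ₀.le)
      (betaPrimeDensity_nonneg ha hu hτ hζ₀.le))]
    calc _ ≤ (2 * π) ^ (-(1 : ℝ) / 2) * ζ ^ (-(1 : ℝ) / 2) *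
          (betaPrimeNormalizer a u τ * ζ ^ (-(a + 1))) :=
          mul_le_mul (normalDensity_le β hζ₀.le) (betaPrimeDensity_le_mul_rpow_neg ha hu hτ hζ₀)
            (betaPrimeDensity_nonneg ha hu hτ hζ₀.le) (by positivity)
      _ = (2 * π) ^ (-(1 : ℝ) / 2) * betaPrimeNormalizer a u τ * ζ ^ (-(1 : ℝ) / 2 + -(a + 1)) := by
          rw [rpow_add hζ₀]
          ring
      _ = _ := by ring_nf

lemma exists_mul_neg_log_le_marginalDensity (ha : 0 < a) (hu : 0 < u) (hu' : u ≤ 1 / 2)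
    (hτ : 0 < τ) :
    ∃ c > 0, ∀ β : ℝ, β ≠ 0 → β ^ 2 < 1 → c * -log (β ^ 2) ≤ marginalDensity a u τ β := by
  have hB := betaPrimeNormalizer_pos ha hu hτ
  set c := (2 * π) ^ (-(1 : ℝ) / 2) / 2 * (betaPrimeNormalizer a u τ * (1 + τ) ^ (-(a + u)))
  refine ⟨c, by positivity, fun β hβ hβ₁ => ?_⟩
  have hβ₀ : 0 < β ^ 2 := sq_pos_iff.2 hβ
  have hsub : Ioc (β ^ 2) 1 ⊆ Ioi 0 := fun ζ hζ => hβ₀.trans hζ.1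
  have hint := integrableOn_normalDensity_mul_betaPrimeDensity ha hu hτ hβ
  have hinv : IntegrableOn (fun ζ : ℝ => c * ζ⁻¹) (Ioc (β ^ 2) 1) :=
    ((continuousOn_inv₀.mono fun ζ hζ => (hβ₀.trans_le hζ.1).ne').integrableOn_Icc.mono_set
      Ioc_subset_Icc_self).const_mul c
  have hlow : ∀ ζ ∈ Ioc (β ^ 2) 1, c * ζ⁻¹ ≤ normalDensity β ζ * betaPrimeDensity a u τ ζ := by
    intro ζ ⟨hβζ, hζ₁⟩
    have hζ₀ : 0 < ζ := hβ₀.trans hβζ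
    -- `u ≤ 1/2` enters here: `ζ^(u-3/2) ≥ ζ⁻¹` on `(0, 1]`.
    have hpow : ζ⁻¹ ≤ ζ ^ (-(1 : ℝ) / 2) * ζ ^ (u - 1) := by
      rw [← rpow_add hζ₀, ← rpow_neg_one]
      exact rpow_le_rpow_of_exponent_ge hζ₀ hζ₁ (by linarith)
    calc c * ζ⁻¹ ≤ c * (ζ ^ (-(1 : ℝ) / 2) * ζ ^ (u - 1)) := by gcongr
      _ = ((2 * π) ^ (-(1 : ℝ) / 2) / 2 * ζ ^ (-(1 : ℝ) / 2)) *
          (betaPrimeNormalizer a u τ * (1 + τ) ^ (-(a + u)) * ζ ^ (u - 1)) := by ring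
      _ ≤ _ := mul_le_mul (half_mul_rpow_le_normalDensity hζ₀ hβζ.le)
          (mul_rpow_sub_one_le_betaPrimeDensity ha hu hτ hζ₀ hζ₁) (by positivity)
          (normalDensity_nonneg β hζ₀.le)
  calc c * -log (β ^ 2) = ∫ ζ in Ioc (β ^ 2) 1, c * ζ⁻¹ := by
        rw [integral_const_mul, ← intervalIntegral.integral_of_le hβ₁.le,
          integral_inv_of_pos hβ₀ one_pos, log_div one_ne_zero hβ₀.ne', log_one, zero_sub]
    _ ≤ ∫ ζ in Ioc (β ^ 2) 1, normalDensity β ζ * betaPrimeDensity a u τ ζ :=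
        setIntegral_mono_on hinv (hint.mono_set hsub) measurableSet_Ioc hlow
    _ ≤ marginalDensity a u τ β := by
        refine setIntegral_mono_set hint ?_ hsub.eventuallyLE
        filter_upwards [ae_restrict_mem measurableSet_Ioi] with ζ (hζ : 0 < ζ)
        exact mul_nonneg (normalDensity_nonneg β hζ.le) (betaPrimeDensity_nonneg ha hu hτ hζ.le)

theorem tendsto_marginalDensity_nhdsNE_zero (ha : 0 < a) (hu : 0 < u) (hu' : u ≤ 1 / 2)
    (hτ : 0 < τ) : Tendsto (marginalDensity a u τ) (𝓝[≠] 0) atTop := by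
  obtain ⟨c, hc, hle⟩ := exists_mul_neg_log_le_marginalDensity ha hu hu' hτ
  have hlog : Tendsto (fun β : ℝ => c * -log (β ^ 2)) (𝓝[≠] 0) atTop := by
    simp only [log_pow, Nat.cast_ofNat]
    exact (tendsto_neg_atBot_atTop.comp (tendsto_log_nhdsNE_zero.const_mul_atBot two_pos)).const_mul_atTop hc
  have hsq : ∀ᶠ β : ℝ in 𝓝[≠] 0, β ^ 2 < 1 :=
    nhdsWithin_le_nhds (((continuous_pow 2).tendsto' (0 : ℝ) 0 (by simp)).eventually
      (eventually_lt_nhds one_pos))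
  refine tendsto_atTop_mono' _ ?_ hlog
  filter_upwards [self_mem_nhdsWithin, hsq] with β hβ hβ₁
  exact hle β hβ hβ₁

end MarginalDensity

end

/-- Under the TPBN hierarchy, the marginal prior density
`p(β) = ∫₀^∞ N(β; 0, ζ) p(ζ) dζ`, with beta-prime mixing density
`p(ζ) = [Γ(a+u)/(Γ(a)Γ(u))] τ^a ζ^{u-1}(ζ+τ)^{-(a+u)}`, diverges to `∞`
as `β → 0` whenever `u ≤ 1/2`. -/
theorem tpbn_marginal_unbounded_at_zero
    (a u τ : ℝ) (ha : 0 < a) (hu : 0 < u) (hu' : u ≤ 1 / 2) (hτ : 0 < τ)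
    (p : ℝ → ℝ)
    (hp : ∀ β : ℝ, p β = ∫ ζ in Set.Ioi (0 : ℝ),
      (2 * π * ζ) ^ (-(1 : ℝ) / 2) * Real.exp (-β ^ 2 / (2 * ζ)) *
        (Real.Gamma (a + u) / (Real.Gamma a * Real.Gamma u) *
          τ ^ a * ζ ^ (u - 1) * (ζ + τ) ^ (-(a + u)))) :
    Tendsto p (nhdsWithin 0 {0}ᶜ) atTop := by
  have hp_eq : p = marginalDensity a u τ := funext hp
  exact hp_eq ▸ tendsto_marginalDensity_nhdsNE_zero ha hu hu' hτ
end
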